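/- Descent criterion for the conjugate direction: In the setting of the adaptive a-metric method, suppose the orthogonality relation a(P(u), d_prev) = (d_prev, u)_{L²} · ‖P(u)‖²_a holds (from optimal previous step length), where P is the a-orthogonal projection onto the tangent space T at u. Then for d := −P(u) + β·(a-projection of d_prev onto T), one has a(u, d) = (−1 + β·(d_prev, u)_{L²})·‖P(u)‖²_a; hence d is a descent direction (a(u,d) < 0) if and only if 1 − β·(d_prev, u)_{L²} > 0, assuming P(u) ≠ 0. -/
import Mathlib


open scoped RealInnerProductSpace

/-- descent criterion for the conjugate direction. Under the orthogonality
relation `a(P(u), d_prev) = (d_prev, u)_{L²} ‖P(u)‖²_a`, the direction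
`d = -P(u) + β P(d_prev)` satisfies
`a(u, d) = (-1 + β (d_prev, u)_{L²}) ‖P(u)‖²_a`, hence `d` is a descent direction
(`a(u,d) < 0`) iff `1 - β (d_prev, u)_{L²} > 0`. -/
theorem stmt15 {H : Type*} [NormedAddCommGroup H] [InnerProductSpace ℝ H] [CompleteSpace H]
    (B : LinearMap.BilinForm ℝ H)
    (hBsymm : ∀ v w : H, B v w = B w v)
    (u : H)
    (P : H → H)
    (hPmem : ∀ v : H, B u (P v) = 0)
    (hP : ∀ v w : H, B u w = 0 → ⟪P v, w⟫ = ⟪v, w⟫)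
    (dprev : H) (β : ℝ)
    (horth : ⟪P u, dprev⟫ = B dprev u * ‖P u‖ ^ 2)
    (hPu : P u ≠ 0)
    (d : H) (hd : d = -P u + β • P dprev) :
    ⟪u, d⟫ = (-1 + β * B dprev u) * ‖P u‖ ^ 2 ∧
      (⟪u, d⟫ < 0 ↔ 1 - β * B dprev u > 0) := by
  have h1 : ⟪u, P u⟫ = ‖P u‖ ^ 2 := by
    have := hP u (P u) (hPmem u)
    rw [real_inner_self_eq_norm_sq] at this
    linarith [this]
  have h2 : ⟪u, P dprev⟫ = B dprev u * ‖P u‖ ^ 2 := by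
    have ha : ⟪P u, P dprev⟫ = ⟪u, P dprev⟫ := hP u (P dprev) (hPmem dprev)
    have hb : ⟪P dprev, P u⟫ = ⟪dprev, P u⟫ := hP dprev (P u) (hPmem u)
    calc ⟪u, P dprev⟫ = ⟪P u, P dprev⟫ := ha.symm
      _ = ⟪P dprev, P u⟫ := real_inner_comm _ _
      _ = ⟪dprev, P u⟫ := hb
      _ = ⟪P u, dprev⟫ := real_inner_comm _ _
      _ = B dprev u * ‖P u‖ ^ 2 := horth
  have key : ⟪u, d⟫ = (-1 + β * B dprev u) * ‖P u‖ ^ 2 := by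
    rw [hd, inner_add_right, inner_neg_right, inner_smul_right, h1, h2]
    ring
  have hpos : (0:ℝ) < ‖P u‖ ^ 2 := pow_pos (norm_pos_iff.mpr hPu) 2
  refine ⟨key, ?_⟩
  rw [key]
  constructor
  · intro h
    nlinarith
  · intro h
    nlinarith
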